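/- Let k be a field of characteristic p > 0, A a commutative k-algebra, a_1,…,a_n ∈ A, and ImD = Σ_{i=1}^n (∂_{x_i} − a_i)·A[x_1,…,x_n]. Let J be the ideal of A generated by a_1^p,…,a_n^p. If every coefficient of a polynomial b ∈ A[x_1,…,x_n] belongs to J, then b ∈ ImD. (In particular, a_i^p·x^a = (∂_{x_i} − a_i)^p(−x^a) ∈ ImD for every i and every monomial x^a.) -/

import Mathlib

/-- `ImD = Σᵢ (∂_{xᵢ} - aᵢ)·A[x₁,…,xₙ]`. -/
def ImD {A : Type*} [CommRing A] {n : ℕ} (a : Fin n → A) :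
    Set (MvPolynomial (Fin n) A) :=
  {h | ∃ g : Fin n → MvPolynomial (Fin n) A,
    h = ∑ i, (MvPolynomial.pderiv i (g i) - MvPolynomial.C (a i) * g i)}

open MvPolynomial Finset

section Aux

variable {A : Type*} [CommRing A] {n : ℕ}

/-- The operator `∂ᵢ - aᵢ` as a linear endomorphism. -/
noncomputable def Dop (a : Fin n → A) (i : Fin n) :
    Module.End A (MvPolynomial (Fin n) A) :=
  (MvPolynomial.pderiv i).toLinearMap - LinearMap.mulLeft A (MvPolynomial.C (a i))

lemma Dop_apply (a : Fin n → A) (i : Fin n) (g : MvPolynomial (Fin n) A) :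
    Dop a i g = MvPolynomial.pderiv i g - MvPolynomial.C (a i) * g := rfl

/-- Freshman's dream for commuting elements in a ring where `p = 0`. -/
lemma freshman {R : Type*} [Ring R] {p : ℕ} (hp : p.Prime) (hR : ((p : ℕ) : R) = 0)
    {x y : R} (h : Commute x y) : (x - y) ^ p = x ^ p - y ^ p := by
  have h2 : Commute x (-y) := h.neg_right
  rw [sub_eq_add_neg, h2.add_pow]
  rw [Finset.sum_range_succ]
  rw [Finset.sum_eq_single_of_mem 0 (Finset.mem_range.mpr hp.pos) ?side]
  case side =>
    intro m hm hm0
    obtain ⟨c, hc⟩ := hp.dvd_choose_self hm0 (Finset.mem_range.mp hm)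
    rw [hc, Nat.cast_mul, hR, zero_mul, mul_zero]
  have hneg : (-y) ^ p = -(y ^ p) := by
    rcases hp.eq_two_or_odd' with h2' | hodd
    · subst h2'
      have h20 : (2 : R) = 0 := by exact_mod_cast hR
      have : y ^ 2 + y ^ 2 = 0 := by rw [← two_mul, h20, zero_mul]
      rw [neg_sq]
      exact eq_neg_of_add_eq_zero_left this
    · exact hodd.neg_pow y
  simp only [pow_zero, one_mul, Nat.sub_zero, Nat.choose_zero_right, Nat.cast_one, mul_one,
    Nat.choose_self, Nat.sub_self, hneg]
  abel

lemma pderiv_pow_monomial (i : Fin n) (m : Fin n →₀ ℕ) (c : A) (t : ℕ) :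
    ((MvPolynomial.pderiv i :
        Derivation A (MvPolynomial (Fin n) A) (MvPolynomial (Fin n) A)).toLinearMap ^ t)
        (MvPolynomial.monomial m c)
      = MvPolynomial.monomial (m - Finsupp.single i t) (c * ((m i).descFactorial t : A)) := by
  induction t with
  | zero => simp
  | succ t ih =>
    rw [pow_succ', Module.End.mul_apply, ih]
    show MvPolynomial.pderiv i _ = _
    rw [MvPolynomial.pderiv_monomial]
    rw [tsub_tsub, ← Finsupp.single_add]
    congr 1
    rw [Finsupp.tsub_apply, Finsupp.single_eq_same, Nat.descFactorial_succ]
    push_cast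
    ring

lemma pderiv_pow_p_monomial {p : ℕ} (hp : p.Prime) (hpA : ((p : ℕ) : A) = 0)
    (i : Fin n) (m : Fin n →₀ ℕ) (c : A) :
    ((MvPolynomial.pderiv i :
        Derivation A (MvPolynomial (Fin n) A) (MvPolynomial (Fin n) A)).toLinearMap ^ p)
        (MvPolynomial.monomial m c) = 0 := by
  rw [pderiv_pow_monomial]
  have hdvd : p ∣ (m i).descFactorial p := by
    rcases le_or_gt p (m i) with h | h
    · exact dvd_trans (Nat.dvd_factorial hp.pos le_rfl)
        (Nat.factorial_dvd_descFactorial _ _)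
    · rw [Nat.descFactorial_eq_zero_iff_lt.mpr h]
      exact dvd_zero p
  obtain ⟨d, hd⟩ := hdvd
  rw [hd]
  have : (((p * d : ℕ)) : A) = 0 := by push_cast; rw [hpA]; ring
  rw [this, mul_zero, map_zero]

set_option maxHeartbeats 800000 in
lemma Dop_pow_p {p : ℕ} (hp : p.Prime) (hpA : ((p : ℕ) : A) = 0)
    (a : Fin n → A) (i : Fin n) (m : Fin n →₀ ℕ) :
    ((Dop a i) ^ p) (-(MvPolynomial.monomial m (1 : A)))
      = MvPolynomial.C (a i ^ p) * MvPolynomial.monomial m (1 : A) := by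
  have hR : ((p : ℕ) : Module.End A (MvPolynomial (Fin n) A)) = 0 := by
    apply LinearMap.ext
    intro x
    rw [Module.End.natCast_apply, LinearMap.zero_apply, ← Nat.cast_smul_eq_nsmul A, hpA,
      zero_smul]
  have hcomm : Commute
      ((MvPolynomial.pderiv i :
        Derivation A (MvPolynomial (Fin n) A) (MvPolynomial (Fin n) A)).toLinearMap)
      (LinearMap.mulLeft A (MvPolynomial.C (a i))) := by
    apply LinearMap.ext
    intro g
    rw [Module.End.mul_apply, Module.End.mul_apply, LinearMap.mulLeft_apply,
      LinearMap.mulLeft_apply]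
    exact MvPolynomial.pderiv_C_mul
  rw [Dop, freshman hp hR hcomm, LinearMap.sub_apply, map_neg, map_neg,
    pderiv_pow_p_monomial hp hpA, LinearMap.pow_mulLeft, LinearMap.mulLeft_apply,
    MvPolynomial.C_pow]
  ring

end Aux

/-- In characteristic `p > 0`, any polynomial all of whose coefficients lie in the ideal
`J = (a₁^p,…,aₙ^p)` belongs to `ImD`; in particular
`aᵢ^p·x^α = (∂_{xᵢ} - aᵢ)^p(-x^α) ∈ ImD`. -/
theorem stmt_19 {k A : Type*} [Field k] [CommRing A] [Algebra k A]
    (p : ℕ) (hp : p.Prime) [CharP k p] {n : ℕ} (a : Fin n → A) :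
    (∀ b : MvPolynomial (Fin n) A,
      (∀ m : Fin n →₀ ℕ, b.coeff m ∈ Ideal.span (Set.range fun i => a i ^ p)) →
      b ∈ ImD a) ∧
    ∀ (i : Fin n) (m : Fin n →₀ ℕ),
      (fun g : MvPolynomial (Fin n) A =>
          MvPolynomial.pderiv i g - MvPolynomial.C (a i) * g)^[p]
        (-(MvPolynomial.monomial m (1 : A)))
        = MvPolynomial.C (a i ^ p) * MvPolynomial.monomial m (1 : A) ∧
      MvPolynomial.C (a i ^ p) * MvPolynomial.monomial m (1 : A) ∈ ImD a := by
  have hpA : ((p : ℕ) : A) = 0 := by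
    rw [← map_natCast (algebraMap k A) p, CharP.cast_eq_zero k p, map_zero]
  -- The submodule version of ImD
  set Φ : (Fin n → MvPolynomial (Fin n) A) →ₗ[A] MvPolynomial (Fin n) A :=
    ∑ i, (Dop a i).comp (LinearMap.proj i) with hΦ
  have hΦ_apply : ∀ g, Φ g = ∑ i, (MvPolynomial.pderiv i (g i)
      - MvPolynomial.C (a i) * g i) := by
    intro g
    rw [hΦ, LinearMap.sum_apply]
    exact Finset.sum_congr rfl fun i _ => rfl
  have hImD : ImD a = ↑(LinearMap.range Φ) := by
    ext h
    constructor
    · rintro ⟨g, rfl⟩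
      exact ⟨g, hΦ_apply g⟩
    · rintro ⟨g, rfl⟩
      exact ⟨g, hΦ_apply g⟩
  -- Part 2 membership
  have key : ∀ (i : Fin n) (m : Fin n →₀ ℕ),
      MvPolynomial.C (a i ^ p) * MvPolynomial.monomial m (1 : A) ∈ LinearMap.range Φ := by
    intro i m
    refine ⟨Function.update (0 : Fin n → MvPolynomial (Fin n) A) i
      (((Dop a i) ^ (p - 1)) (-(MvPolynomial.monomial m (1 : A)))), ?_⟩
    rw [hΦ_apply]
    rw [Finset.sum_eq_single_of_mem i (Finset.mem_univ i)]
    · rw [Function.update_self, ← Dop_apply, ← Module.End.mul_apply, ← pow_succ',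
        Nat.sub_add_cancel hp.one_lt.le, Dop_pow_p hp hpA]
    · intro j _ hj
      rw [Function.update_of_ne hj]
      simp
  constructor
  · -- Part 1
    intro b hb
    have hmem : b ∈ LinearMap.range Φ := by
      rw [b.as_sum]
      apply Submodule.sum_mem
      intro m hm
      have hcoeff := hb m
      have hle : Ideal.span (Set.range fun i => a i ^ p)
          ≤ Submodule.comap (MvPolynomial.monomial m : A →ₗ[A] MvPolynomial (Fin n) A)
            (LinearMap.range Φ) := by
        rw [Ideal.span_le]
        rintro _ ⟨i, rfl⟩
        show MvPolynomial.monomial m (a i ^ p) ∈ LinearMap.range Φ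
        have := key i m
        rwa [MvPolynomial.C_mul_monomial, mul_one] at this
      exact hle hcoeff
    rw [hImD]
    exact hmem
  · -- Part 2
    intro i m
    refine ⟨?_, ?_⟩
    · have hfun : (fun g : MvPolynomial (Fin n) A =>
          MvPolynomial.pderiv i g - MvPolynomial.C (a i) * g) = ⇑(Dop a i) := rfl
      rw [hfun, ← Module.End.pow_apply, Dop_pow_p hp hpA]
    · rw [hImD]
      exact key i m
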